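/- arXiv:2112.02362 — 6 statements merged into one kernel-verified Lean document; each statement's English description precedes it below -/
import Mathlib

section
/- If R(m-1, k) and R(m, k-1) are both even (for m, k ≥ 2), then R(m, k) < R(m-1, k) + R(m, k-1), i.e., the Ramsey recurrence inequality is strict. -/
/-- `hasRamsey N m k` : every red/blue (true/false) edge-coloring of the complete
graph on `N` vertices contains a red clique of size `m` or a blue clique of size `k`. -/
def hasRamsey (N m k : ℕ) : Prop :=
  ∀ c : Fin N → Fin N → Bool, (∀ i j, c i j = c j i) →
    (∃ s : Finset (Fin N), s.card = m ∧ ∀ i ∈ s, ∀ j ∈ s, i ≠ j → c i j = true) ∨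
    (∃ s : Finset (Fin N), s.card = k ∧ ∀ i ∈ s, ∀ j ∈ s, i ≠ j → c i j = false)

/-- The Ramsey number `R m k`, the least `N` with the Ramsey property. -/
noncomputable def ramseyNumber (m k : ℕ) : ℕ := sInf {N | hasRamsey N m k}

/-!
Read a coloring as the graph `G` of its red edges, so that blue edges form `Gᶜ`. If a vertex has
at least `R(m-1, k)` red neighbours, the Ramsey property inside its red neighbourhood yields a red
`K_m` through it or a blue `K_k`; dually for `R(m, k-1)` blue neighbours. Hence a graph on
`R(m-1, k) + R(m, k-1) - 1` vertices with neither clique is regular of degree `R(m-1, k) - 1`.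
When both Ramsey numbers are even, that degree and the number of vertices are both odd, which the
handshake lemma forbids.
-/

open Finset SimpleGraph

namespace SimpleGraph

variable {V : Type*} [Fintype V] {G : SimpleGraph V} [DecidableRel G.Adj]

theorem IsRegularOfDegree.even_card_of_odd {d : ℕ} (hG : G.IsRegularOfDegree d) (hd : Odd d) :
    Even (Fintype.card V) := by
  simpa [hG.degree_eq, hd] using G.even_card_odd_degree_vertices

variable (G)

theorem degree_add_degree_compl [DecidableEq V] (v : V) :
    G.degree v + Gᶜ.degree v = Fintype.card V - 1 := by
  have := G.degree_lt_card_verts v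
  rw [degree_compl]; omega

end SimpleGraph

variable {N m k a b : ℕ}

theorem hasRamsey_iff :
    hasRamsey N m k ↔ ∀ G : SimpleGraph (Fin N), ¬ G.CliqueFree m ∨ ¬ Gᶜ.CliqueFree k := by
  classical
  constructor
  · intro h G
    rcases h (fun i j => decide (G.Adj i j)) (fun i j => by simp [G.adj_comm])
      with ⟨s, hs, hred⟩ | ⟨s, hs, hblue⟩
    · exact .inl fun hG => hG s ⟨fun i hi j hj hij => by simpa using hred i hi j hj hij, hs⟩
    · refine .inr fun hG => hG s ⟨fun i hi j hj hij => ?_, hs⟩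
      simpa [compl_adj, hij] using hblue i hi j hj hij
  · intro h c hc
    let G : SimpleGraph (Fin N) := fromRel fun i j => c i j = true
    rcases h G with hG | hG <;> obtain ⟨s, hs⟩ := not_forall_not.1 hG
    · refine .inl ⟨s, hs.card_eq, fun i hi j hj hij => ?_⟩
      simpa [G, hc j i, or_self] using (hs.isClique hi hj hij).2
    · refine .inr ⟨s, hs.card_eq, fun i hi j hj hij => ?_⟩
      have hblue := hs.isClique hi hj hij
      simp only [G, compl_adj, fromRel_adj, ne_eq, hij, not_false_eq_true, true_and, not_or,
        Bool.not_eq_true] at hblue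
      exact hblue.1

theorem hasRamsey.symm (h : hasRamsey N m k) : hasRamsey N k m :=
  hasRamsey_iff.2 fun G => by simpa [or_comm] using hasRamsey_iff.1 h Gᶜ

theorem hasRamsey.not_cliqueFree {V : Type*} [Fintype V] (h : hasRamsey N m k)
    (G : SimpleGraph V) (hN : N ≤ Fintype.card V) : ¬ G.CliqueFree m ∨ ¬ Gᶜ.CliqueFree k := by
  obtain ⟨f⟩ : Nonempty (Fin N ↪ V) := Function.Embedding.nonempty_of_card_le (by simpa using hN)
  let e : G.comap f ↪g G := Embedding.comap f G
  exact (hasRamsey_iff.1 h (G.comap f)).imp (mt (CliqueFree.comap e.isContained))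
    (mt (CliqueFree.comap (Embedding.complEquiv e).isContained))

section Neighborhood

variable {V : Type*} [Fintype V] [DecidableEq V] (G : SimpleGraph V) [DecidableRel G.Adj]

theorem hasRamsey.degree_lt (h : hasRamsey a m k) (hG : G.CliqueFree (m + 1))
    (hGc : Gᶜ.CliqueFree k) (v : V) : G.degree v < a := by
  by_contra! hv
  rcases h.not_cliqueFree (G.induce (G.neighborSet v)) (by rwa [card_neighborSet_eq_degree])
    with hH | hHc
  · obtain ⟨s, hs⟩ := not_forall_not.1 hH
    have hs' : G.IsNClique m (s.map (Function.Embedding.subtype _)) :=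
      hs.map.mono (map_comap_le _ _)
    refine hG _ (hs'.insert (a := v) fun w hw => ?_)
    obtain ⟨w, -, rfl⟩ := mem_map.1 hw
    exact w.2
  · exact hHc (hGc.comap (Embedding.complEquiv (Embedding.induce _)).isContained)

theorem hasRamsey.degree_compl_lt (h : hasRamsey b m k) (hG : G.CliqueFree m)
    (hGc : Gᶜ.CliqueFree (k + 1)) (v : V) : Gᶜ.degree v < b :=
  h.symm.degree_lt Gᶜ hGc (by rwa [compl_compl]) v

end Neighborhood

theorem hasRamsey_add_add_one (ha : hasRamsey a m (k + 1)) (hb : hasRamsey b (m + 1) k) :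
    hasRamsey (a + b + 1) (m + 1) (k + 1) := by
  refine hasRamsey_iff.2 fun G => ?_
  classical
  by_contra! ⟨hG, hGc⟩
  have hsum := G.degree_add_degree_compl 0
  have hred := ha.degree_lt G hG hGc 0
  have hblue := hb.degree_compl_lt G hG hGc 0
  rw [Fintype.card_fin] at hsum
  omega

theorem hasRamsey_add_sub_one_of_even (ha : hasRamsey a m (k + 1)) (hb : hasRamsey b (m + 1) k)
    (ha₀ : 0 < a) (hae : Even a) (hbe : Even b) : hasRamsey (a + b - 1) (m + 1) (k + 1) := by
  refine hasRamsey_iff.2 fun G => ?_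
  classical
  by_contra! ⟨hG, hGc⟩
  have hreg : G.IsRegularOfDegree (a - 1) := fun v => by
    have hsum := G.degree_add_degree_compl v
    have hred := ha.degree_lt G hG hGc v
    have hblue := hb.degree_compl_lt G hG hGc v
    rw [Fintype.card_fin] at hsum
    omega
  have hcard := hreg.even_card_of_odd (Nat.Even.sub_odd ha₀ hae odd_one)
  rw [Fintype.card_fin] at hcard
  exact Nat.not_even_iff_odd.2 (Nat.Even.sub_odd (by omega) (hae.add hbe) odd_one) hcard

theorem exists_hasRamsey : ∀ m k : ℕ, ∃ N, hasRamsey N m k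
  | 0, _ => ⟨0, fun _ _ => .inl ⟨∅, rfl, by simp⟩⟩
  | _ + 1, 0 => ⟨0, fun _ _ => .inr ⟨∅, rfl, by simp⟩⟩
  | m + 1, k + 1 =>
    have ⟨_, ha⟩ := exists_hasRamsey m (k + 1)
    have ⟨_, hb⟩ := exists_hasRamsey (m + 1) k
    ⟨_, hasRamsey_add_add_one ha hb⟩

theorem hasRamsey_ramseyNumber (m k : ℕ) : hasRamsey (ramseyNumber m k) m k :=
  Nat.sInf_mem (exists_hasRamsey m k)

theorem ramseyNumber_le (h : hasRamsey N m k) : ramseyNumber m k ≤ N :=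
  Nat.sInf_le h

theorem ramseyNumber_pos (hm : m ≠ 0) (hk : k ≠ 0) : 0 < ramseyNumber m k := by
  refine Nat.pos_of_ne_zero fun h0 => ?_
  have h := hasRamsey_ramseyNumber m k
  rw [h0] at h
  rcases h (fun _ _ => true) (fun _ _ => rfl) with ⟨s, hs, -⟩ | ⟨s, hs, -⟩ <;>
    simp [Subsingleton.elim s ∅] at hs <;> omega

/-- If `R(m-1, k)` and `R(m, k-1)` are both even (`m, k ≥ 2`), then the Ramsey
recurrence inequality is strict: `R(m, k) < R(m-1, k) + R(m, k-1)`. -/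
theorem ramsey_recurrence_strict (m k : ℕ) (hm : 2 ≤ m) (hk : 2 ≤ k)
    (h1 : Even (ramseyNumber (m - 1) k)) (h2 : Even (ramseyNumber m (k - 1))) :
    ramseyNumber m k < ramseyNumber (m - 1) k + ramseyNumber m (k - 1) := by
  obtain ⟨m, rfl⟩ : ∃ m', m = m' + 1 := ⟨m - 1, by omega⟩
  obtain ⟨k, rfl⟩ : ∃ k', k = k' + 1 := ⟨k - 1, by omega⟩
  simp only [Nat.add_sub_cancel] at h1 h2 ⊢
  have ha₀ : 0 < ramseyNumber m (k + 1) := ramseyNumber_pos (by omega) (by omega)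
  have hle := ramseyNumber_le (hasRamsey_add_sub_one_of_even (hasRamsey_ramseyNumber _ _)
    (hasRamsey_ramseyNumber _ _) ha₀ h1 h2)
  omega
end

section
/- The Ramsey number R(3, 4) equals 9: every 2-coloring of the edges of K_9 contains a red triangle or a blue K_4, and there is a 2-coloring of K_8 with neither. -/
open Finset

namespace SimpleGraph

variable {V : Type*} {G : SimpleGraph V}

theorem IsRegularOfDegree.even_card_mul [Fintype V] [DecidableRel G.Adj] {d : ℕ}
    (h : G.IsRegularOfDegree d) : Even (Fintype.card V * d) := by
  have := G.sum_degrees_eq_twice_card_edges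
  simp only [h.degree_eq, sum_const, card_univ, smul_eq_mul] at this
  exact ⟨_, this.trans (two_mul _)⟩

theorem exists_isNClique_or_isNIndepSet_three_of_adj {x : V} {t w : Finset V} (hx : x ∈ t)
    (hwt : w ⊆ t) (hw : #w = 3) (hadj : ∀ y ∈ w, G.Adj x y) :
    ∃ u ⊆ t, G.IsNClique 3 u ∨ G.IsNIndepSet 3 u := by
  classical
  by_cases h : ∃ y ∈ w, ∃ z ∈ w, G.Adj y z
  · obtain ⟨y, hy, z, hz, hyz⟩ := h
    refine ⟨{x, y, z}, ?_, Or.inl (is3Clique_triple_iff.2 ⟨hadj y hy, hadj z hz, hyz⟩)⟩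
    simp [insert_subset_iff, hx, hwt hy, hwt hz]
  · push Not at h
    exact ⟨w, hwt, Or.inr ⟨fun y hy z hz _ => h y hy z hz, hw⟩⟩

/-- `R(3, 3) ≤ 6`, inside an arbitrary set of six vertices. -/
theorem exists_isNClique_or_isNIndepSet_three (t : Finset V) (ht : 6 ≤ #t) :
    ∃ u ⊆ t, G.IsNClique 3 u ∨ G.IsNIndepSet 3 u := by
  classical
  obtain ⟨x, hx⟩ : t.Nonempty := card_pos.1 (by omega)
  have hsplit : #{y ∈ t.erase x | G.Adj x y} + #{y ∈ t.erase x | ¬G.Adj x y} = #t - 1 := by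
    rw [card_filter_add_card_filter_not, card_erase_of_mem hx]
  have hsub (p : V → Prop) [DecidablePred p] : {y ∈ t.erase x | p y} ⊆ t :=
    (filter_subset _ _).trans (erase_subset _ _)
  by_cases hred : 3 ≤ #{y ∈ t.erase x | G.Adj x y}
  · obtain ⟨w, hw, hw3⟩ := exists_subset_card_eq hred
    exact exists_isNClique_or_isNIndepSet_three_of_adj hx (hw.trans (hsub _)) hw3
      fun y hy => (mem_filter.1 (hw hy)).2
  · obtain ⟨w, hw, hw3⟩ := exists_subset_card_eq (show 3 ≤ #{y ∈ t.erase x | ¬G.Adj x y} by omega)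
    have hadj : ∀ y ∈ w, Gᶜ.Adj x y := fun y hy => by
      obtain ⟨hyx, hxy⟩ := mem_filter.1 (hw hy)
      exact (compl_adj G x y).2 ⟨(ne_of_mem_erase hyx).symm, hxy⟩
    obtain ⟨u, hut, hu⟩ :=
      exists_isNClique_or_isNIndepSet_three_of_adj hx (hw.trans (hsub _)) hw3 hadj
    exact ⟨u, hut, by simpa [or_comm] using hu⟩

section Degree

variable [Fintype V] [DecidableRel G.Adj]

theorem degree_lt_of_cliqueFree_three {k : ℕ} (h3 : G.CliqueFree 3) (hk : G.IndepSetFree k)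
    (v : V) : G.degree v < k := by
  by_contra! h
  obtain ⟨t, ht, htk⟩ := exists_subset_card_eq h
  refine hk t ⟨(G.isIndepSet_neighborSet_of_triangleFree h3 v).mono fun y hy => ?_, htk⟩
  simpa using ht hy

theorem compl_degree_lt_six [DecidableEq V] (h3 : G.CliqueFree 3) (h4 : G.IndepSetFree 4) (v : V) :
    Gᶜ.degree v < 6 := by
  by_contra! h
  obtain ⟨t, ht, ht6⟩ := exists_subset_card_eq h
  obtain ⟨u, hut, hu | hu⟩ := G.exists_isNClique_or_isNIndepSet_three t ht6.ge
  · exact h3 u hu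
  · have hvu : Gᶜ.IsNClique 4 (insert v u) :=
      ((isNClique_compl G).2 hu).insert fun y hy => (mem_neighborFinset _ _ _).1 (ht (hut hy))
    exact h4 _ ((isNClique_compl G).1 hvu)

end Degree

theorem not_cliqueFree_three_or_not_indepSetFree_four [Fintype V] (hV : Fintype.card V = 9) :
    ¬G.CliqueFree 3 ∨ ¬G.IndepSetFree 4 := by
  classical
  by_contra! ⟨h3, h4⟩
  have hreg : G.IsRegularOfDegree 3 := fun v => by
    have hred := G.degree_lt_of_cliqueFree_three h3 h4 v
    have hblue := G.compl_degree_lt_six h3 h4 v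
    rw [degree_compl, hV] at hblue
    omega
  have := hreg.even_card_mul
  rw [hV] at this
  exact absurd this (by decide)

end SimpleGraph

theorem hasRamsey_of_forall_simpleGraph {N m k : ℕ}
    (h : ∀ G : SimpleGraph (Fin N), ¬G.CliqueFree m ∨ ¬G.IndepSetFree k) : hasRamsey N m k := by
  intro c hc
  let G : SimpleGraph (Fin N) :=
    { Adj i j := i ≠ j ∧ c i j = true
      symm := ⟨fun i j hij => ⟨hij.1.symm, hc j i ▸ hij.2⟩⟩ }
  rcases h G with hred | hblue
  · obtain ⟨s, hs⟩ := not_forall_not.1 hred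
    exact Or.inl ⟨s, hs.card_eq, fun i hi j hj hij => (hs.isClique hi hj hij).2⟩
  · obtain ⟨s, hs⟩ := not_forall_not.1 hblue
    refine Or.inr ⟨s, hs.card_eq, fun i hi j hj hij => ?_⟩
    simpa [G, hij] using hs.isIndepSet hi hj hij

theorem hasRamsey_mono {n N m k : ℕ} (hle : n ≤ N) (h : hasRamsey n m k) : hasRamsey N m k := by
  intro c hc
  have lift : ∀ {b : Bool} {s : Finset (Fin n)},
      (∀ i ∈ s, ∀ j ∈ s, i ≠ j → c (Fin.castLE hle i) (Fin.castLE hle j) = b) →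
      ∀ i ∈ s.map (Fin.castLEEmb hle), ∀ j ∈ s.map (Fin.castLEEmb hle), i ≠ j → c i j = b := by
    simp only [mem_map, Fin.castLEEmb_apply]
    rintro b s hs _ ⟨i, hi, rfl⟩ _ ⟨j, hj, rfl⟩ hij
    exact hs i hi j hj (ne_of_apply_ne _ hij)
  rcases h _ fun i j => hc _ _ with ⟨s, hs, hred⟩ | ⟨s, hs, hblue⟩
  · exact Or.inl ⟨_, by simp [hs], lift hred⟩
  · exact Or.inr ⟨_, by simp [hs], lift hblue⟩

theorem ramseyNumber_eq_succ {n m k : ℕ} (h : hasRamsey (n + 1) m k) (h' : ¬hasRamsey n m k) :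
    ramseyNumber m k = n + 1 :=
  IsLeast.csInf_eq ⟨h, fun N hN => by
    by_contra! hlt
    exact h' (hasRamsey_mono (by omega) hN)⟩

/-- Subtraction in `Fin 8` is cyclic: red iff the cyclic distance of `i` and `j` is `1` or `4`. -/
def wagnerColoring (i j : Fin 8) : Bool :=
  decide (i - j ∈ ({1, 4, 7} : Finset (Fin 8)))

set_option maxRecDepth 20000 in
theorem not_hasRamsey_eight_three_four : ¬hasRamsey 8 3 4 := fun h =>
  absurd (h wagnerColoring (by decide)) (by decide)

/-- `R(3, 4) = 9`: every 2-coloring of `K₉` contains a red triangle or a blue `K₄`,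
and there is a 2-coloring of `K₈` with neither. -/
theorem ramsey_three_four :
    hasRamsey 9 3 4 ∧ ¬ hasRamsey 8 3 4 ∧ ramseyNumber 3 4 = 9 := by
  have h9 : hasRamsey 9 3 4 := hasRamsey_of_forall_simpleGraph fun _ =>
    SimpleGraph.not_cliqueFree_three_or_not_indepSetFree_four (Fintype.card_fin 9)
  exact ⟨h9, not_hasRamsey_eight_three_four, ramseyNumber_eq_succ h9 not_hasRamsey_eight_three_four⟩
end

section
/- For every k ≥ 1, the independence number of the Andrásfai graph H_{3k-1} is exactly k. -/
/-!
The non-neighbours of a vertex `j`, `j` itself included, form the arc `j + (-k, k)` of `2k - 1`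
consecutive residues. Hence an independent set containing `a` lies in the arc `a + (-k, k)`, and
two of its points at distance at least `k` inside that arc would be adjacent; so it lies within
`k` consecutive residues. Conversely `{0, …, k - 1}` is independent.
-/

/-- The Andrásfai graph `H_{3k-1}`: vertex set `ZMod (3k-1)`, with `i ~ j` iff
`i - j ≡ r (mod 3k-1)` for some `r` with `k ≤ r ≤ 2k - 1`. -/
def andrasfaiGraph (k : ℕ) : SimpleGraph (ZMod (3 * k - 1)) :=
  SimpleGraph.fromRel (fun i j => k ≤ (i - j).val ∧ (i - j).val ≤ 2 * k - 1)

theorem Finset.card_le_of_forall_sub_lt {s : Finset ℕ} {k : ℕ}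
    (h : ∀ x ∈ s, ∀ y ∈ s, y - x < k) : s.card ≤ k := by
  rcases s.eq_empty_or_nonempty with rfl | hs
  · simp
  calc s.card ≤ (Finset.Ico (s.min' hs) (s.min' hs + k)).card := by
        refine Finset.card_le_card fun y hy => Finset.mem_Ico.2 ⟨s.min'_le y hy, ?_⟩
        have := h _ (s.min'_mem hs) y hy
        omega
    _ = k := by simp

section

variable {k : ℕ}

theorem andrasfaiGraph_adj_iff (hk : 1 ≤ k) {i j : ZMod (3 * k - 1)} :
    (andrasfaiGraph k).Adj i j ↔ k ≤ (i - j).val ∧ (i - j).val ≤ 2 * k - 1 := by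
  have : NeZero (3 * k - 1) := ⟨by omega⟩
  have hval : (j - i).val = if i - j = 0 then 0 else 3 * k - 1 - (i - j).val := by
    rw [← ZMod.neg_val, neg_sub]
  have hlt := (i - j).val_lt
  rw [andrasfaiGraph, SimpleGraph.fromRel_adj, hval, ne_eq, ← sub_eq_zero]
  constructor
  · rintro ⟨hij, h | h⟩
    · exact h
    · rw [if_neg hij] at h; omega
  · rintro h
    have hij : i - j ≠ 0 := fun h0 => by rw [h0, ZMod.val_zero] at h; omega
    exact ⟨hij, Or.inl h⟩

/-- Adding `k - 1` maps the arc `j + (-k, k)` onto the residues `0, …, 2k - 2`. -/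
theorem andrasfaiGraph_not_adj_iff (hk : 1 ≤ k) {i j : ZMod (3 * k - 1)} :
    ¬ (andrasfaiGraph k).Adj i j ↔
      (i - j + ((k - 1 : ℕ) : ZMod (3 * k - 1))).val ≤ 2 * k - 2 := by
  have : NeZero (3 * k - 1) := ⟨by omega⟩
  have hlt := (i - j).val_lt
  rw [andrasfaiGraph_adj_iff hk, ZMod.val_add, ZMod.val_natCast_of_lt (by omega)]
  rcases lt_or_ge ((i - j).val + (k - 1)) (3 * k - 1) with h | h
  · rw [Nat.mod_eq_of_lt h]; omega
  · rw [Nat.mod_eq_sub_mod h, Nat.mod_eq_of_lt (by omega)]; omega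

theorem andrasfaiGraph_not_adj_natCast (hk : 1 ≤ k) {i j : ℕ} (hi : i < k) (hj : j < k) :
    ¬ (andrasfaiGraph k).Adj i j := by
  have hcast : (i : ZMod (3 * k - 1)) - j + ((k - 1 : ℕ) : ZMod (3 * k - 1)) =
      (i + (k - 1) - j : ℕ) := by
    rw [Nat.cast_sub (show j ≤ i + (k - 1) by omega), Nat.cast_add]; ring
  rw [andrasfaiGraph_not_adj_iff hk, hcast, ZMod.val_natCast_of_lt (by omega)]
  omega

theorem andrasfaiGraph_card_le_of_forall_not_adj (hk : 1 ≤ k) {s : Finset (ZMod (3 * k - 1))}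
    (hs : ∀ i ∈ s, ∀ j ∈ s, ¬ (andrasfaiGraph k).Adj i j) : s.card ≤ k := by
  have : NeZero (3 * k - 1) := ⟨by omega⟩
  rcases s.eq_empty_or_nonempty with rfl | ⟨a, ha⟩
  · simp
  set φ : ZMod (3 * k - 1) → ℕ := fun x => (x - a + ((k - 1 : ℕ) : ZMod (3 * k - 1))).val
  have hφ_le : ∀ x ∈ s, φ x ≤ 2 * k - 2 := fun x hx =>
    (andrasfaiGraph_not_adj_iff hk).1 (hs x hx a ha)
  have hφ_injOn : Set.InjOn φ s := fun x _ y _ hxy => by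
    simpa using ZMod.val_injective _ hxy
  have hφ_spread : ∀ x ∈ s, ∀ y ∈ s, φ y - φ x < k := by
    intro x hx y hy
    rcases le_or_gt (φ y) (φ x) with hle | hlt
    · omega
    have hyx : (y - x).val = φ y - φ x := by
      rw [← ZMod.val_sub hlt.le]; congr 1; ring
    have := (andrasfaiGraph_adj_iff hk).not.1 (hs y hy x hx)
    have := hφ_le y hy
    omega
  rw [← Finset.card_image_of_injOn hφ_injOn]
  exact Finset.card_le_of_forall_sub_lt (by simpa using hφ_spread)

end

/-- For every `k ≥ 1`, the independence number of the Andrásfai graph `H_{3k-1}`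
is exactly `k`: there is an independent set of size `k`, and every independent
set has size at most `k`. -/
theorem andrasfai_independence_number (k : ℕ) (hk : 1 ≤ k) :
    (∃ s : Finset (ZMod (3 * k - 1)), s.card = k ∧
        ∀ i ∈ s, ∀ j ∈ s, ¬ (andrasfaiGraph k).Adj i j) ∧
    ∀ s : Finset (ZMod (3 * k - 1)),
        (∀ i ∈ s, ∀ j ∈ s, ¬ (andrasfaiGraph k).Adj i j) → s.card ≤ k := by
  refine ⟨⟨(Finset.range k).image Nat.cast, ?_, ?_⟩,
    fun s hs => andrasfaiGraph_card_le_of_forall_not_adj hk hs⟩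
  · rw [Finset.card_image_of_injOn, Finset.card_range]
    intro i hi j hj hij
    simp only [Finset.coe_range, Set.mem_Iio] at hi hj
    simpa [ZMod.val_natCast_of_lt (show i < 3 * k - 1 by omega),
      ZMod.val_natCast_of_lt (show j < 3 * k - 1 by omega)] using congrArg ZMod.val hij
  · simp only [Finset.mem_image, Finset.mem_range]
    rintro _ ⟨i, hi, rfl⟩ _ ⟨j, hj, rfl⟩
    exact andrasfaiGraph_not_adj_natCast hk hi hj
end

section
/- For every k ≥ 2, R(3, k+1) ≥ 3k: there exists a triangle-free graph on 3k-1 vertices with no independent set of size k+1. -/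
/-!
The witness is the Andrásfai graph on `ℤ/(3k-1)`: `x ~ y` iff the representative of `x - y`
in `[0, 3k-1)` is `≡ 1 (mod 3)`. Since `3k - 1 ≡ 2 (mod 3)` this relation is symmetric, and a
triangle would give three such differences summing to `0` or `3k - 1`, impossible mod 3.
In an independent set `s`, of the two differences `b - a` and `a - b` of distinct elements
(which sum to `3k - 1`) exactly one is `≡ 0 (mod 3)`; "`b - a ≡ 0`" is a transitive tournament
on `s`, so it has a source `a`, and `b ↦ (b - a) / 3` embeds `s` into `{0, …, k-1}`.
-/

namespace Fin

variable {n : ℕ}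

theorem val_sub_eq_ite (a b : Fin n) :
    (a - b).val = if b.val ≤ a.val then a.val - b.val else n + a.val - b.val := by
  split_ifs with h
  exacts [sub_val_of_le h, coe_sub_iff_lt.2 (by omega)]

theorem val_sub_self (a : Fin n) : (a - a).val = 0 := by
  simp [val_sub_eq_ite]

theorem val_sub_add_val_sub (x y z : Fin n) :
    (x - y).val + (y - z).val = (x - z).val ∨
      (x - y).val + (y - z).val = (x - z).val + n := by
  have := x.isLt; have := y.isLt; have := z.isLt
  rw [val_sub_eq_ite x y, val_sub_eq_ite y z, val_sub_eq_ite x z]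
  split_ifs <;> omega

theorem val_sub_add_val_sub_swap {x y : Fin n} (h : x ≠ y) :
    (x - y).val + (y - x).val = n := by
  have hval : x.val ≠ y.val := fun h' => h (Fin.ext h')
  rw [val_sub_eq_ite x y, val_sub_eq_ite y x]
  split_ifs <;> omega

theorem eq_of_val_sub_eq {a b c : Fin n} (h : (b - a).val = (c - a).val) : b = c := by
  have := b.isLt; have := c.isLt
  rw [val_sub_eq_ite, val_sub_eq_ite] at h
  exact Fin.ext (by split_ifs at h <;> omega)

end Fin

theorem Finset.exists_forall_rel_of_total_of_trans {α : Type*} {r : α → α → Prop}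
    {s : Finset α} (hs : s.Nonempty) (htotal : ∀ x ∈ s, ∀ y ∈ s, r x y ∨ r y x)
    (htrans : ∀ x ∈ s, ∀ y ∈ s, ∀ z ∈ s, r x y → r y z → r x z) :
    ∃ a ∈ s, ∀ b ∈ s, r a b := by
  induction hs using Finset.Nonempty.cons_induction with
  | singleton a =>
    refine ⟨a, mem_singleton_self a, fun b hb => ?_⟩
    rw [mem_singleton.1 hb]
    exact (htotal a (mem_singleton_self a) a (mem_singleton_self a)).elim id id
  | cons x s hx _ ih =>
    obtain ⟨m, hm, hmin⟩ := ih
      (fun a ha b hb => htotal a (mem_cons_of_mem ha) b (mem_cons_of_mem hb))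
      (fun a ha b hb c hc => htrans a (mem_cons_of_mem ha) b (mem_cons_of_mem hb) c
        (mem_cons_of_mem hc))
    rcases htotal x (mem_cons_self x s) m (mem_cons_of_mem hm) with hxm | hmx
    · refine ⟨x, mem_cons_self x s, fun b hb => ?_⟩
      rcases mem_cons.1 hb with rfl | hb
      · exact (htotal b (mem_cons_self b s) b (mem_cons_self b s)).elim id id
      · exact htrans x (mem_cons_self x s) m (mem_cons_of_mem hm) b (mem_cons_of_mem hb) hxm
          (hmin b hb)
    · refine ⟨m, mem_cons_of_mem hm, fun b hb => ?_⟩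
      rcases mem_cons.1 hb with rfl | hb
      exacts [hmx, hmin b hb]

namespace SimpleGraph

def andrasfaiGraph (k : ℕ) : SimpleGraph (Fin (3 * k - 1)) where
  Adj x y := (x - y).val % 3 = 1
  symm := ⟨fun x y h => by
    have := x.isLt
    have hxy : x ≠ y := by rintro rfl; simp [Fin.val_sub_self] at h
    have := Fin.val_sub_add_val_sub_swap hxy
    omega⟩
  loopless := ⟨fun x h => by simp [Fin.val_sub_self] at h⟩

variable {k : ℕ} {s : Finset (Fin (3 * k - 1))}

theorem andrasfaiGraph_adj {x y : Fin (3 * k - 1)} :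
    (andrasfaiGraph k).Adj x y ↔ (x - y).val % 3 = 1 := Iff.rfl

theorem andrasfaiGraph_cliqueFree_three : (andrasfaiGraph k).CliqueFree 3 := by
  rintro s hs
  obtain ⟨a, b, c, hab, hac, hbc, -⟩ := is3Clique_iff.1 hs
  rw [andrasfaiGraph_adj] at hab hac hbc
  rcases Fin.val_sub_add_val_sub a b c with h | h <;> omega

theorem andrasfaiGraph.exists_forall_val_sub_mod_three_eq_zero
    (hs : (andrasfaiGraph k)ᶜ.IsClique (s : Set _)) (hne : s.Nonempty) :
    ∃ a ∈ s, ∀ b ∈ s, (b - a).val % 3 = 0 := by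
  have hnonadj : ∀ x ∈ s, ∀ y ∈ s, x ≠ y → (x - y).val % 3 ≠ 1 := fun x hx y hy hxy =>
    ((compl_adj _ x y).1 (hs hx hy hxy)).2
  refine Finset.exists_forall_rel_of_total_of_trans hne (fun x hx y hy => ?_)
    (fun x hx y hy z hz hxy hyz => ?_)
  · obtain rfl | hxy := eq_or_ne x y
    · simp [Fin.val_sub_self]
    have := Fin.val_sub_add_val_sub_swap hxy
    have := hnonadj x hx y hy hxy
    have := hnonadj y hy x hx hxy.symm
    have := x.isLt
    omega
  · obtain rfl | hxz := eq_or_ne x z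
    · simp [Fin.val_sub_self]
    -- `z - x` is `(z - y) + (y - x)` or that minus `3k - 1 ≡ 2`, which would make `z ~ x`.
    have := hnonadj z hz x hx hxz.symm
    have := x.isLt
    rcases Fin.val_sub_add_val_sub z y x with h | h <;> omega

theorem andrasfaiGraph.card_le_of_isClique_compl
    (hs : (andrasfaiGraph k)ᶜ.IsClique (s : Set _)) : s.card ≤ k := by
  obtain rfl | hne := s.eq_empty_or_nonempty
  · simp
  obtain ⟨a, -, ha⟩ := andrasfaiGraph.exists_forall_val_sub_mod_three_eq_zero hs hne
  have hmaps : Set.MapsTo (fun b => (b - a).val / 3) s (Finset.range k) := fun b hb => by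
    have := ha b hb
    have := (b - a).isLt
    simp only [Finset.coe_range, Set.mem_Iio]
    omega
  have hinj : Set.InjOn (fun b => (b - a).val / 3) s := fun b hb c hc hbc => by
    have := ha b hb
    have := ha c hc
    exact Fin.eq_of_val_sub_eq (a := a) (by simp only at hbc; omega)
  simpa using Finset.card_le_card_of_injOn _ hmaps hinj

theorem andrasfaiGraph_compl_cliqueFree : (andrasfaiGraph k)ᶜ.CliqueFree (k + 1) := fun s hs =>
  absurd (andrasfaiGraph.card_le_of_isClique_compl hs.isClique) (by rw [hs.card_eq]; omega)

end SimpleGraph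

theorem ramsey_three_lower_bound_general (k : ℕ) :
    ∃ G : SimpleGraph (Fin (3 * k - 1)), G.CliqueFree 3 ∧ Gᶜ.CliqueFree (k + 1) :=
  ⟨_, SimpleGraph.andrasfaiGraph_cliqueFree_three, SimpleGraph.andrasfaiGraph_compl_cliqueFree⟩

/-- For every `k ≥ 2`, `R(3, k+1) ≥ 3k`: there is a triangle-free graph on
`3k - 1` vertices with no independent set of size `k + 1` (i.e. whose complement
has no clique of size `k + 1`). -/
theorem ramsey_three_lower_bound (k : ℕ) (hk : 2 ≤ k) :
    ∃ G : SimpleGraph (Fin (3 * k - 1)), G.CliqueFree 3 ∧ Gᶜ.CliqueFree (k + 1) :=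
  ramsey_three_lower_bound_general k
end

section
/- In every 3-coloring of the edges of the complete graph on 17 vertices there is a monochromatic triangle. -/
/-!
Induction on the number of colours, writing `R` for `triangleRamseyBound` (so `R 3 = 17`).
Among `R (k + 1)` vertices pick `v`; its edges to the others use `k + 1` colours, so by pigeonhole
some colour `a` occurs on at least `R k` of them. If two of those neighbours are joined by an
`a`-edge they form an `a`-triangle with `v`; otherwise the edges among them use only the remaining
`k` colours.
-/

open Finset

variable {V α : Type*}

def HasMonochromaticTriangle (c : V → V → α) : Prop :=
  ∃ i j k : V, i ≠ j ∧ j ≠ k ∧ i ≠ k ∧ c i j = c j k ∧ c j k = c i k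

def triangleRamseyBound : ℕ → ℕ
  | 0 => 2
  | k + 1 => (k + 1) * (triangleRamseyBound k - 1) + 2

theorem hasMonochromaticTriangle_of_triangleRamseyBound_le [DecidableEq V] [DecidableEq α]
    (c : V → V → α) (C : Finset α) (S : Finset V)
    (hC : ∀ i ∈ S, ∀ j ∈ S, i ≠ j → c i j ∈ C) (hS : triangleRamseyBound #C ≤ #S) :
    HasMonochromaticTriangle c := by
  induction hk : #C generalizing C S with
  | zero =>
    rw [hk, triangleRamseyBound] at hS
    obtain ⟨i, hi, j, hj, hij⟩ := one_lt_card.mp (by omega : 1 < #S)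
    simpa [card_eq_zero.mp hk] using hC i hi j hj hij
  | succ k ih =>
    set r := triangleRamseyBound k
    have hS : (k + 1) * (r - 1) + 2 ≤ #S := by simpa [hk, triangleRamseyBound] using hS
    obtain ⟨v, hv⟩ : S.Nonempty := card_pos.mp (by omega)
    have hmaps : ∀ u ∈ S.erase v, c v u ∈ C := fun u hu =>
      hC v hv u (mem_of_mem_erase hu) (ne_of_mem_erase hu).symm
    have hlt : #C * (r - 1) < #(S.erase v) := by rw [card_erase_of_mem hv, hk]; omega
    obtain ⟨a, haC, hT⟩ := exists_lt_card_fiber_of_mul_lt_card_of_maps_to hmaps hlt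
    set T := {u ∈ S.erase v | c v u = a}
    have hTS : T ⊆ S := (filter_subset _ _).trans (erase_subset _ _)
    by_cases h : ∃ i ∈ T, ∃ j ∈ T, i ≠ j ∧ c i j = a
    · obtain ⟨i, hi, j, hj, hij, hija⟩ := h
      simp only [T, mem_filter, mem_erase] at hi hj
      exact ⟨v, i, j, hi.1.1.symm, hij, hj.1.1.symm, hi.2.trans hija.symm, hija.trans hj.2.symm⟩
    · push Not at h
      refine ih (C.erase a) T (fun i hi j hj hij => mem_erase.mpr ⟨h i hi j hj hij, ?_⟩) ?_ ?_
      · exact hC i (hTS hi) j (hTS hj) hij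
      · rw [card_erase_of_mem haC, hk, Nat.add_sub_cancel]; omega
      · rw [card_erase_of_mem haC, hk]; rfl

theorem K17_three_coloring_monochromatic_triangle_general
    (c : Fin 17 → Fin 17 → Fin 3) :
    ∃ i j k : Fin 17, i ≠ j ∧ j ≠ k ∧ i ≠ k ∧ c i j = c j k ∧ c j k = c i k :=
  hasMonochromaticTriangle_of_triangleRamseyBound_le c univ univ
    (fun _ _ _ _ _ => mem_univ _) (by decide)

/-- Every 3-coloring of the edges of `K₁₇` contains a monochromatic triangle. -/
theorem K17_three_coloring_monochromatic_triangle
    (c : Fin 17 → Fin 17 → Fin 3) (hsymm : ∀ i j, c i j = c j i) :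
    ∃ i j k : Fin 17, i ≠ j ∧ j ≠ k ∧ i ≠ k ∧ c i j = c j k ∧ c j k = c i k :=
  K17_three_coloring_monochromatic_triangle_general c
end

section
/- (Turán's theorem) Let n = hk + r with 0 ≤ r < k and k ≥ 1. Any simple graph on n vertices containing no complete subgraph on k+1 vertices has at most (1/2)(n² - r²)(k-1)/k + r(r-1)/2 edges. -/
open Finset SimpleGraph

theorem turan_general (n h k r : ℕ) (hn : n = h * k + r) (hr : r < k)
    (G : SimpleGraph (Fin n)) (hfree : G.CliqueFree (k + 1)) :
    G.edgeSet.ncard ≤ (n ^ 2 - r ^ 2) * (k - 1) / (2 * k) + r * (r - 1) / 2 := by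
  classical
  have hmod : n % k = r := by
    rw [hn, Nat.mul_comm, Nat.mul_add_mod_self_left, Nat.mod_eq_of_lt hr]
  have hbound :
      #G.edgeFinset ≤ (n ^ 2 - (n % k) ^ 2) * (k - 1) / (2 * k) + (n % k).choose 2 := by
    simpa only [Fintype.card_fin] using hfree.card_edgeFinset_le
  rwa [hmod, Nat.choose_two_right, ← Set.ncard_coe_finset, coe_edgeFinset] at hbound

/-- Turán's theorem: if `n = h*k + r` with `0 ≤ r < k`, `k ≥ 1`, then any simple
graph on `n` vertices with no complete subgraph on `k + 1` vertices has at most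
`(1/2)(n² - r²)(k-1)/k + r(r-1)/2` edges (all divisions here are exact). -/
theorem turan (n h k r : ℕ) (hk : 1 ≤ k) (hn : n = h * k + r) (hr : r < k)
    (G : SimpleGraph (Fin n)) (hfree : G.CliqueFree (k + 1)) :
    G.edgeSet.ncard ≤ (n ^ 2 - r ^ 2) * (k - 1) / (2 * k) + r * (r - 1) / 2 :=
  turan_general n h k r hn hr G hfree
end
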